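/- arXiv:2302.05278 — 5 statements merged into one kernel-verified Lean document; each statement's English description precedes it below -/
import Mathlib

section
/- Let g be the unique element of minimum Euclidean norm of K. Then the function φ(d) = h(d) + (1/2)‖d‖² has a unique global minimizer over ℝⁿ, and this minimizer is d* = −g. -/
open scoped InnerProductSpace


/-- Let `K ⊆ ℝⁿ` be nonempty, compact and convex, let `h` be its support
function (`h d = max_{ξ∈K} ⟪ξ, d⟫`), and let `g` be the (unique) element of minimum
Euclidean norm of `K`.  Then `φ(d) = h(d) + ½‖d‖²` has a unique global minimizer over
`ℝⁿ`, and this minimizer is `d* = -g`. -/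
theorem steepest_descent_direction {n : ℕ}
    (K : Set (EuclideanSpace ℝ (Fin n)))
    (hKne : K.Nonempty) (hKcp : IsCompact K) (hKcv : Convex ℝ K)
    (h : EuclideanSpace ℝ (Fin n) → ℝ)
    (hh : ∀ d, IsGreatest ((fun ξ => ⟪ξ, d⟫_ℝ) '' K) (h d))
    (g : EuclideanSpace ℝ (Fin n))
    (hgK : g ∈ K) (hgmin : ∀ ξ ∈ K, ‖g‖ ≤ ‖ξ‖)
    (hguniq : ∀ ξ ∈ K, (∀ ζ ∈ K, ‖ξ‖ ≤ ‖ζ‖) → ξ = g) :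
    (∀ d, h (-g) + (1 / 2) * ‖(-g : EuclideanSpace ℝ (Fin n))‖ ^ 2 ≤ h d + (1 / 2) * ‖d‖ ^ 2) ∧
      (∀ d', (∀ d, h d' + (1 / 2) * ‖d'‖ ^ 2 ≤ h d + (1 / 2) * ‖d‖ ^ 2) → d' = -g) := by
  have hKne' : Nonempty K := hKne.to_subtype
  -- variational inequality for the minimum norm element
  have key : ∀ ξ ∈ K, ‖g‖ ^ 2 ≤ ⟪g, ξ⟫_ℝ := by
    have hg : ‖(0 : EuclideanSpace ℝ (Fin n)) - g‖ =
        ⨅ w : K, ‖(0 : EuclideanSpace ℝ (Fin n)) - (w : EuclideanSpace ℝ (Fin n))‖ := by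
      apply le_antisymm
      · exact le_ciInf fun w => by simpa using hgmin w w.2
      · have hb : BddBelow (Set.range fun w : K =>
            ‖(0 : EuclideanSpace ℝ (Fin n)) - (w : EuclideanSpace ℝ (Fin n))‖) :=
          ⟨0, by rintro x ⟨w, rfl⟩; positivity⟩
        simpa using ciInf_le hb (⟨g, hgK⟩ : K)
    have := (norm_eq_iInf_iff_real_inner_le_zero hKcv hgK).mp hg
    intro ξ hξ
    have h2 := this ξ hξ
    have : ⟪(0 : EuclideanSpace ℝ (Fin n)) - g, ξ - g⟫_ℝ = ⟪g, g⟫_ℝ - ⟪g, ξ⟫_ℝ := by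
      simp [inner_sub_left, inner_sub_right, real_inner_comm]
      ring
    rw [this] at h2
    have := real_inner_self_eq_norm_sq g
    linarith
  -- h(-g) = -‖g‖²
  have hneg : h (-g) = -‖g‖ ^ 2 := by
    obtain ⟨ξ₀, hξ₀, heq⟩ := (hh (-g)).1
    have hle : h (-g) ≤ -‖g‖ ^ 2 := by
      have := key ξ₀ hξ₀
      have h3 : ⟪ξ₀, -g⟫_ℝ = -⟪g, ξ₀⟫_ℝ := by
        rw [inner_neg_right, real_inner_comm]
      have heq' : ⟪ξ₀, -g⟫_ℝ = h (-g) := heq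
      rw [← heq', h3]; linarith
    have hge : -‖g‖ ^ 2 ≤ h (-g) := by
      have h5 : ⟪g, -g⟫_ℝ ≤ h (-g) := (hh (-g)).2 ⟨g, hgK, rfl⟩
      have h4 : ⟪g, -g⟫_ℝ = -‖g‖ ^ 2 := by
        rw [inner_neg_right, real_inner_self_eq_norm_sq]
      linarith
    linarith
  -- lower bound: h d ≥ ⟪g, d⟫
  have hlb : ∀ d, ⟪g, d⟫_ℝ ≤ h d := fun d => (hh d).2 ⟨g, hgK, rfl⟩
  have hsq : ∀ d : EuclideanSpace ℝ (Fin n),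
      ⟪g, d⟫_ℝ + (1 / 2) * ‖d‖ ^ 2 = (1 / 2) * ‖d + g‖ ^ 2 - (1 / 2) * ‖g‖ ^ 2 := by
    intro d
    have := norm_add_sq_real d g
    have hc : ⟪d, g⟫_ℝ = ⟪g, d⟫_ℝ := (real_inner_comm d g).symm
    linarith
  constructor
  · intro d
    have h1 := hlb d
    have h2 := hsq d
    have h3 : (0 : ℝ) ≤ ‖d + g‖ ^ 2 := by positivity
    rw [hneg, norm_neg]
    nlinarith
  · intro d' hd'
    have h1 := hd' (-g)
    rw [hneg, norm_neg] at h1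
    have h2 := hlb d'
    have h3 := hsq d'
    have h4 : ‖d' + g‖ ^ 2 ≤ 0 := by nlinarith
    have h5 : d' + g = 0 := by
      have h6 : ‖d' + g‖ ^ 2 = 0 := le_antisymm h4 (by positivity)
      have h7 : ‖d' + g‖ = 0 := by
        have := pow_eq_zero_iff (two_ne_zero) |>.mp h6
        exact this
      exact norm_eq_zero.mp h7
    have : d' = -g := by linear_combination (norm := module) h5
    exact this
end

section
/- Let d* ∈ ℝⁿ be a global minimizer of φ_B(d) = h(d) + (1/2)⟨d, B d⟩. Then the vector g = −B d* satisfies g ∈ K and ⟨g, d*⟩ = h(d*). -/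
open scoped InnerProductSpace

/-- Let `K ⊆ ℝⁿ` be nonempty, compact and convex with support function `h`,
let `B` be a symmetric positive-definite linear endomorphism of `ℝⁿ`, and let `d*` be a
global minimizer of `φ_B(d) = h(d) + ½ ⟪d, B d⟫`.  Then `g = -B d*` satisfies `g ∈ K`
and `⟪g, d*⟫ = h d*`. -/
theorem minimizer_of_phiB_gives_subgradient {n : ℕ}
    (K : Set (EuclideanSpace ℝ (Fin n)))
    (hKne : K.Nonempty) (hKcp : IsCompact K) (hKcv : Convex ℝ K)
    (h : EuclideanSpace ℝ (Fin n) → ℝ)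
    (hh : ∀ d, IsGreatest ((fun ξ => ⟪ξ, d⟫_ℝ) '' K) (h d))
    (B : EuclideanSpace ℝ (Fin n) →ₗ[ℝ] EuclideanSpace ℝ (Fin n))
    (hBsym : ∀ u v, ⟪u, B v⟫_ℝ = ⟪B u, v⟫_ℝ)
    (hBpos : ∀ d, d ≠ 0 → 0 < ⟪d, B d⟫_ℝ)
    (dstar : EuclideanSpace ℝ (Fin n))
    (hdstar : ∀ d, h dstar + (1 / 2) * ⟪dstar, B dstar⟫_ℝ ≤ h d + (1 / 2) * ⟪d, B d⟫_ℝ) :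
    -B dstar ∈ K ∧ ⟪-B dstar, dstar⟫_ℝ = h dstar := by
  have hmem : ∀ d, ∃ ξ ∈ K, h d = ⟪ξ, d⟫_ℝ := by
    intro d
    obtain ⟨ξ, hξ, hval⟩ := (hh d).1
    exact ⟨ξ, hξ, hval.symm⟩
  have hub : ∀ d, ∀ ξ ∈ K, ⟪ξ, d⟫_ℝ ≤ h d := by
    intro d ξ hξ
    exact (hh d).2 ⟨ξ, hξ, rfl⟩
  have hsub : ∀ a b, h (a + b) ≤ h a + h b := by
    intro a b
    obtain ⟨ξ, hξ, hv⟩ := hmem (a + b)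
    rw [hv, inner_add_right]
    exact add_le_add (hub a ξ hξ) (hub b ξ hξ)
  have hhom : ∀ (s : ℝ), 0 ≤ s → ∀ d, h (s • d) = s * h d := by
    intro s hs d
    obtain ⟨ξ, hξ, hv⟩ := hmem (s • d)
    obtain ⟨ζ, hζ, hw⟩ := hmem d
    apply le_antisymm
    · rw [hv, real_inner_smul_right]
      exact mul_le_mul_of_nonneg_left (hub d ξ hξ) hs
    · calc s * h d = ⟪ζ, s • d⟫_ℝ := by rw [hw, real_inner_smul_right]
        _ ≤ h (s • d) := hub _ ζ hζ
  -- key inequality: ⟪-B dstar, d⟫ ≤ h d for all d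
  have key : ∀ d, ⟪-B dstar, d⟫_ℝ ≤ h d := by
    intro d
    have hq : ∀ t : ℝ, 0 < t → 0 ≤ h d + ⟪B dstar, d⟫_ℝ + t / 2 * ⟪d, B d⟫_ℝ := by
      intro t ht
      have h1 := hdstar (dstar + t • d)
      have hexp : ⟪dstar + t • d, B (dstar + t • d)⟫_ℝ
          = ⟪dstar, B dstar⟫_ℝ + 2 * t * ⟪B dstar, d⟫_ℝ + t ^ 2 * ⟪d, B d⟫_ℝ := by
        have h2 : ⟪d, B dstar⟫_ℝ = ⟪B dstar, d⟫_ℝ := real_inner_comm _ _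
        have h4 : ⟪dstar, B d⟫_ℝ = ⟪B dstar, d⟫_ℝ := hBsym dstar d
        rw [map_add, map_smul, inner_add_left, inner_add_right, inner_add_right,
          real_inner_smul_left, real_inner_smul_left, real_inner_smul_right,
          real_inner_smul_right, h2, h4]
        ring
      have h3 : h (dstar + t • d) ≤ h dstar + t * h d := by
        calc h (dstar + t • d) ≤ h dstar + h (t • d) := hsub _ _
          _ = h dstar + t * h d := by rw [hhom t ht.le]
      rw [hexp] at h1
      nlinarith [h1, h3]
    have hmain : (0:ℝ) ≤ h d + ⟪B dstar, d⟫_ℝ := by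
      refine le_of_forall_pos_le_add ?_
      intro ε hε
      rcases le_or_gt ⟪d, B d⟫_ℝ 0 with hc | hc
      · have := hq 1 one_pos
        nlinarith
      · have ht : (0:ℝ) < ε / ⟪d, B d⟫_ℝ := div_pos hε hc
        have := hq (ε / ⟪d, B d⟫_ℝ) ht
        have hcne : ⟪d, B d⟫_ℝ ≠ 0 := ne_of_gt hc
        have heq : ε / ⟪d, B d⟫_ℝ / 2 * ⟪d, B d⟫_ℝ = ε / 2 := by
          rw [div_mul_eq_mul_div, div_mul_cancel₀ ε hcne]
        nlinarith
    rw [inner_neg_left]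
    linarith
  constructor
  · -- membership via separation
    by_contra hg
    obtain ⟨f, u, hfu, hug⟩ :=
      geometric_hahn_banach_closed_point hKcv hKcp.isClosed hg
    set y := (InnerProductSpace.toDual ℝ (EuclideanSpace ℝ (Fin n))).symm f with hy
    have hfy : ∀ x, f x = ⟪y, x⟫_ℝ := by
      intro x
      rw [hy, InnerProductSpace.toDual_symm_apply]
    obtain ⟨ξ, hξ, hv⟩ := hmem y
    have h1 : h y < u := by
      rw [hv, real_inner_comm, ← hfy]
      exact hfu ξ hξ
    have h2 : u < ⟪-B dstar, y⟫_ℝ := by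
      rw [real_inner_comm, ← hfy]
      exact hug
    exact absurd (key y) (by linarith)
  · -- equality
    set q := ⟪dstar, B dstar⟫_ℝ with hqdef
    have hq0 : 0 ≤ q := by
      rcases eq_or_ne dstar 0 with h0 | h0
      · simp [hqdef, h0]
      · exact (hBpos dstar h0).le
    have hBsd : ⟪B dstar, dstar⟫_ℝ = q := real_inner_comm _ _
    have hge : -q ≤ h dstar := by
      have := key dstar
      rw [inner_neg_left, hBsd] at this
      linarith
    have hle : h dstar ≤ -q := by
      have haux : ∀ t : ℝ, 0 < t → t ≤ 1 → h dstar + q ≤ t / 2 * q := by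
        intro t ht ht1
        have h1 := hdstar ((1 - t) • dstar)
        have hexp : ⟪(1 - t) • dstar, B ((1 - t) • dstar)⟫_ℝ = (1 - t) ^ 2 * q := by
          rw [map_smul, real_inner_smul_left, real_inner_smul_right]
          ring
        have h3 : h ((1 - t) • dstar) = (1 - t) * h dstar := hhom (1 - t) (by linarith) dstar
        rw [hexp, h3] at h1
        nlinarith
      have : h dstar + q ≤ 0 := by
        refine le_of_forall_pos_le_add ?_
        intro ε hε
        rcases eq_or_lt_of_le hq0 with hq' | hq'
        · have := haux 1 one_pos le_rfl
          nlinarith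
        · set t := min 1 (ε / q) with htdef
          have ht : 0 < t := lt_min one_pos (div_pos hε hq')
          have ht1 : t ≤ 1 := min_le_left _ _
          have := haux t ht ht1
          have h5 : t * q ≤ ε := by
            have h6 : t ≤ ε / q := min_le_right _ _
            calc t * q ≤ ε / q * q := by nlinarith
              _ = ε := by field_simp
          linarith
      linarith
    rw [inner_neg_left, hBsd]
    linarith
end

section
/- Let g ∈ K be a minimizer of the function ξ ↦ ⟨ξ, B⁻¹ ξ⟩ over K. Then h(−B⁻¹ g) = −⟨g, B⁻¹ g⟩, i.e. max_{ξ∈K} ⟨ξ, −B⁻¹ g⟩ = −⟨g, B⁻¹ g⟩. -/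
open scoped InnerProductSpace

/-- Let `K ⊆ ℝⁿ` be nonempty, compact and convex with support function `h`,
let `B` be a symmetric positive-definite linear endomorphism of `ℝⁿ` with (symmetric
positive-definite) inverse `B⁻¹`, and let `g ∈ K` minimize `ξ ↦ ⟪ξ, B⁻¹ ξ⟫` over `K`.
Then `h(-B⁻¹ g) = -⟪g, B⁻¹ g⟫`. -/
theorem support_function_at_neg_Binv_min {n : ℕ}
    (K : Set (EuclideanSpace ℝ (Fin n)))
    (hKne : K.Nonempty) (hKcp : IsCompact K) (hKcv : Convex ℝ K)
    (h : EuclideanSpace ℝ (Fin n) → ℝ)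
    (hh : ∀ d, IsGreatest ((fun ξ => ⟪ξ, d⟫_ℝ) '' K) (h d))
    (B Binv : EuclideanSpace ℝ (Fin n) →ₗ[ℝ] EuclideanSpace ℝ (Fin n))
    (hBsym : ∀ u v, ⟪u, B v⟫_ℝ = ⟪B u, v⟫_ℝ)
    (hBpos : ∀ d, d ≠ 0 → 0 < ⟪d, B d⟫_ℝ)
    (hinv₁ : ∀ x, B (Binv x) = x) (hinv₂ : ∀ x, Binv (B x) = x)
    (hBinvsym : ∀ u v, ⟪u, Binv v⟫_ℝ = ⟪Binv u, v⟫_ℝ)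
    (hBinvpos : ∀ d, d ≠ 0 → 0 < ⟪d, Binv d⟫_ℝ)
    (g : EuclideanSpace ℝ (Fin n)) (hgK : g ∈ K)
    (hgmin : ∀ ξ ∈ K, ⟪g, Binv g⟫_ℝ ≤ ⟪ξ, Binv ξ⟫_ℝ) :
    h (-Binv g) = -⟪g, Binv g⟫_ℝ := by

  -- First-order optimality: for all ξ ∈ K, ⟪ξ - g, Binv g⟫ ≥ 0
  have key : ∀ ξ ∈ K, 0 ≤ ⟪ξ - g, Binv g⟫_ℝ := by
    intro ξ hξ
    set v := ξ - g with hv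
    set a := ⟪v, Binv g⟫_ℝ with ha
    set b := ⟪v, Binv v⟫_ℝ with hb
    have hbnn : 0 ≤ b := by
      rcases eq_or_ne v 0 with h0 | h0
      · simp [hb, h0]
      · exact (hBinvpos v h0).le
    have hsym : ⟪g, Binv v⟫_ℝ = a := by
      rw [ha, hBinvsym, real_inner_comm]
    have ht : ∀ t : ℝ, t ∈ Set.Ioc (0:ℝ) 1 → 0 ≤ 2 * a + t * b := by
      intro t htt
      have hmem : g + t • v ∈ K := by
        have := hKcv hgK hξ (by linarith [htt.2] : (0:ℝ) ≤ 1 - t) htt.1.le (by ring)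
        have heq : (1 - t) • g + t • ξ = g + t • v := by
          rw [hv]; module
        rwa [heq] at this
      have hle := hgmin _ hmem
      have hexp : ⟪g + t • v, Binv (g + t • v)⟫_ℝ
          = ⟪g, Binv g⟫_ℝ + t * (2 * a + t * b) := by
        rw [map_add, map_smul, inner_add_left, inner_add_right, inner_add_right,
          real_inner_smul_left, real_inner_smul_left, real_inner_smul_right,
          real_inner_smul_right, hsym, ← ha, ← hb]
        ring
      rw [hexp] at hle
      nlinarith [htt.1]
    by_contra hcon
    push_neg at hcon
    rcases eq_or_lt_of_le hbnn with hb0 | hb0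
    · have := ht 1 ⟨one_pos, le_refl 1⟩
      nlinarith
    · have htpos : 0 < min 1 (-a / b) := lt_min one_pos (div_pos (by linarith) hb0)
      have := ht (min 1 (-a / b)) ⟨htpos, min_le_left _ _⟩
      have hmle : min 1 (-a / b) * b ≤ (-a / b) * b :=
        mul_le_mul_of_nonneg_right (min_le_right _ _) hb0.le
      rw [div_mul_cancel₀ _ hb0.ne'] at hmle
      nlinarith
  -- The candidate value is attained and is an upper bound
  refine (hh (-Binv g)).unique ⟨⟨g, hgK, by simp [inner_neg_right]⟩, ?_⟩
  rintro y ⟨ξ, hξ, rfl⟩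
  have := key ξ hξ
  have h1 : ⟪ξ - g, Binv g⟫_ℝ = ⟪ξ, Binv g⟫_ℝ - ⟪g, Binv g⟫_ℝ := by
    rw [inner_sub_left]
  simp only [inner_neg_right]
  linarith [h1 ▸ this]
end

section
/- Let g be the unique minimizer over K of the function ξ ↦ ⟨ξ, B⁻¹ ξ⟩. Then the function φ_B(d) = h(d) + (1/2)⟨d, B d⟩ has a unique global minimizer over ℝⁿ, and this minimizer is d* = −B⁻¹ g. -/
open scoped InnerProductSpace

/-- Let `K ⊆ ℝⁿ` be nonempty, compact and convex with support function `h`,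
let `B` be a symmetric positive-definite linear endomorphism of `ℝⁿ` with (symmetric
positive-definite) inverse `B⁻¹`, and let `g` be the unique minimizer over `K` of
`ξ ↦ ⟪ξ, B⁻¹ ξ⟫`.  Then `φ_B(d) = h(d) + ½ ⟪d, B d⟫` has a unique global minimizer over
`ℝⁿ`, and this minimizer is `d* = -B⁻¹ g`. -/
theorem newton_type_direction {n : ℕ}
    (K : Set (EuclideanSpace ℝ (Fin n)))
    (hKne : K.Nonempty) (hKcp : IsCompact K) (hKcv : Convex ℝ K)
    (h : EuclideanSpace ℝ (Fin n) → ℝ)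
    (hh : ∀ d, IsGreatest ((fun ξ => ⟪ξ, d⟫_ℝ) '' K) (h d))
    (B Binv : EuclideanSpace ℝ (Fin n) →ₗ[ℝ] EuclideanSpace ℝ (Fin n))
    (hBsym : ∀ u v, ⟪u, B v⟫_ℝ = ⟪B u, v⟫_ℝ)
    (hBpos : ∀ d, d ≠ 0 → 0 < ⟪d, B d⟫_ℝ)
    (hinv₁ : ∀ x, B (Binv x) = x) (hinv₂ : ∀ x, Binv (B x) = x)
    (hBinvsym : ∀ u v, ⟪u, Binv v⟫_ℝ = ⟪Binv u, v⟫_ℝ)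
    (hBinvpos : ∀ d, d ≠ 0 → 0 < ⟪d, Binv d⟫_ℝ)
    (g : EuclideanSpace ℝ (Fin n)) (hgK : g ∈ K)
    (hgmin : ∀ ξ ∈ K, ⟪g, Binv g⟫_ℝ ≤ ⟪ξ, Binv ξ⟫_ℝ)
    (hguniq : ∀ g' ∈ K, (∀ ξ ∈ K, ⟪g', Binv g'⟫_ℝ ≤ ⟪ξ, Binv ξ⟫_ℝ) → g' = g) :
    (∀ d, h (-Binv g) + (1 / 2) * ⟪-Binv g, B (-Binv g)⟫_ℝ ≤ h d + (1 / 2) * ⟪d, B d⟫_ℝ) ∧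
      (∀ d', (∀ d, h d' + (1 / 2) * ⟪d', B d'⟫_ℝ ≤ h d + (1 / 2) * ⟪d, B d⟫_ℝ) →
        d' = -Binv g) := by
  have _ : True := trivial
  -- expansion for Binv
  have expinv : ∀ x y : EuclideanSpace ℝ (Fin n), ⟪x + y, Binv (x + y)⟫_ℝ
      = ⟪x, Binv x⟫_ℝ + 2 * ⟪y, Binv x⟫_ℝ + ⟪y, Binv y⟫_ℝ := by
    intro x y
    have hc : ⟪x, Binv y⟫_ℝ = ⟪y, Binv x⟫_ℝ := by
      rw [hBinvsym, real_inner_comm]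
    simp only [map_add, inner_add_left, inner_add_right, hc]
    ring
  -- first-order optimality: ∀ ξ ∈ K, ⟪g, Binv g⟫ ≤ ⟪ξ, Binv g⟫
  have star : ∀ ξ ∈ K, ⟪g, Binv g⟫_ℝ ≤ ⟪ξ, Binv g⟫_ℝ := by
    intro ξ hξ
    by_contra hcon
    push_neg at hcon
    set c : ℝ := ⟪ξ - g, Binv g⟫_ℝ with hcdef
    have hc0 : c < 0 := by
      have hceq : c = ⟪ξ, Binv g⟫_ℝ - ⟪g, Binv g⟫_ℝ := by
        rw [hcdef, inner_sub_left]
      rw [hceq]; linarith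
    have hne : ξ - g ≠ 0 := by
      intro h0
      have : c = 0 := by rw [hcdef, h0]; simp
      linarith
    set q : ℝ := ⟪ξ - g, Binv (ξ - g)⟫_ℝ with hqdef
    have hq : 0 < q := hBinvpos _ hne
    set t : ℝ := min 1 (-c / q) with htdef
    have ht0 : 0 < t := lt_min one_pos (div_pos (by linarith) hq)
    have ht1 : t ≤ 1 := min_le_left _ _
    have htq : t * q ≤ -c := by
      have := min_le_right 1 (-c / q)
      calc t * q ≤ (-c / q) * q := by nlinarith
        _ = -c := by field_simp
    have hmem : g + t • (ξ - g) ∈ K := by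
      have := hKcv hgK hξ (a := 1 - t) (b := t) (by linarith) (le_of_lt ht0) (by ring)
      have heq : (1 - t) • g + t • ξ = g + t • (ξ - g) := by
        simp [smul_sub, sub_smul]; abel
      rwa [heq] at this
    have hmin := hgmin _ hmem
    rw [expinv g (t • (ξ - g))] at hmin
    have h1 : ⟪t • (ξ - g), Binv g⟫_ℝ = t * c := by
      rw [real_inner_smul_left, ← hcdef]
    have h2 : ⟪t • (ξ - g), Binv (t • (ξ - g))⟫_ℝ = t * t * q := by
      rw [map_smul, real_inner_smul_left, real_inner_smul_right, ← hqdef]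
      ring
    rw [h1, h2] at hmin
    nlinarith
  -- value of h at d* := -Binv g
  have hgval : h (-Binv g) = -⟪g, Binv g⟫_ℝ := by
    obtain ⟨⟨ξ₀, hξ₀, hval⟩, hub⟩ := hh (-Binv g)
    have h1 : h (-Binv g) ≤ -⟪g, Binv g⟫_ℝ := by
      rw [← hval]
      have := star ξ₀ hξ₀
      simp only [inner_neg_right]
      linarith
    have h2 : -⟪g, Binv g⟫_ℝ ≤ h (-Binv g) := by
      have := hub ⟨g, hgK, rfl⟩
      simpa [inner_neg_right] using this
    linarith
  -- key quadratic identity: ⟪g,d⟫ + ½⟪d,Bd⟫ + ½⟪g,Binv g⟫ = ½⟪d+Binv g, B (d+Binv g)⟫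
  have quad : ∀ d : EuclideanSpace ℝ (Fin n), ⟪g, d⟫_ℝ + (1/2) * ⟪d, B d⟫_ℝ + (1/2) * ⟪g, Binv g⟫_ℝ
      = (1/2) * ⟪d + Binv g, B (d + Binv g)⟫_ℝ := by
    intro d
    have hc1 : ⟪Binv g, B d⟫_ℝ = ⟪g, d⟫_ℝ := by
      rw [hBsym, hinv₁]
    have hc2 : ⟪d, B (Binv g)⟫_ℝ = ⟪g, d⟫_ℝ := by
      rw [hinv₁, real_inner_comm]
    have hc3 : ⟪Binv g, B (Binv g)⟫_ℝ = ⟪g, Binv g⟫_ℝ := by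
      rw [hinv₁, real_inner_comm]
    simp only [map_add, inner_add_left, inner_add_right, hc1, hc2, hc3]
    ring
  -- φ(d*) value
  have hstarval : h (-Binv g) + (1/2) * ⟪-Binv g, B (-Binv g)⟫_ℝ
      = -(1/2) * ⟪g, Binv g⟫_ℝ := by
    have : ⟪-Binv g, B (-Binv g)⟫_ℝ = ⟪g, Binv g⟫_ℝ := by
      rw [map_neg, inner_neg_neg, hinv₁, real_inner_comm]
    rw [hgval, this]; ring
  have hBnn : ∀ x : EuclideanSpace ℝ (Fin n), 0 ≤ ⟪x, B x⟫_ℝ := by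
    intro x
    rcases eq_or_ne x 0 with rfl | hx
    · simp
    · exact le_of_lt (hBpos x hx)
  have hlower : ∀ d : EuclideanSpace ℝ (Fin n), -(1/2) * ⟪g, Binv g⟫_ℝ ≤ h d + (1/2) * ⟪d, B d⟫_ℝ := by
    intro d
    have hgd : ⟪g, d⟫_ℝ ≤ h d := (hh d).2 ⟨g, hgK, rfl⟩
    have := quad d
    have := hBnn (d + Binv g)
    nlinarith
  constructor
  · intro d
    rw [hstarval]
    exact hlower d
  · intro d' hd'
    have hle := hd' (-Binv g)
    rw [hstarval] at hle
    have hgd : ⟪g, d'⟫_ℝ ≤ h d' := (hh d').2 ⟨g, hgK, rfl⟩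
    have hq := quad d'
    have hz : ⟪d' + Binv g, B (d' + Binv g)⟫_ℝ ≤ 0 := by nlinarith
    have : d' + Binv g = 0 := by
      by_contra hne
      exact absurd hz (not_le.mpr (hBpos _ hne))
    exact eq_neg_of_add_eq_zero_left this
end

section
/- Let q_1, …, q_p : ℝⁿ → ℝ be continuously differentiable and let f(x) = max_{j=1,…,p} q_j(x). Fix x ∈ ℝⁿ and let J(x) = {j : q_j(x) = f(x)} be the set of active indices at x. Then for every d ∈ ℝⁿ, the Clarke directional derivative satisfies f°(x; d) ≤ max_{j ∈ J(x)} ⟨∇q_j(x), d⟩; in particular f°(x; d) ≤ max_{j=1,…,p} ⟨∇q_j(x), d⟩. -/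
open Filter Topology
open scoped InnerProductSpace

/-- The Clarke directional derivative of `f` at `x` along `d`:
`f°(x; d) = limsup_{y → x, t ↓ 0} (f (y + t d) - f y) / t`. -/
noncomputable def clarkeDeriv {n : ℕ} (f : EuclideanSpace ℝ (Fin n) → ℝ)
    (x d : EuclideanSpace ℝ (Fin n)) : ℝ :=
  Filter.limsup (fun p : EuclideanSpace ℝ (Fin n) × ℝ => (f (p.1 + p.2 • d) - f p.1) / p.2)
    ((𝓝 x) ×ˢ (𝓝[>] (0 : ℝ)))

/-!
Each `q j` is C¹, hence strictly differentiable at `x`, so its difference quotients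
`(q j (y + t • d) - q j y) / t` converge to `⟪∇q_j(x), d⟫` as `y → x`, `t ↓ 0`. Near `x`
every index active at a point is active at `x`; if `j` is active at `y + t • d`, then the
quotient of `f` is at most that of `q j`, and if `j` is active at `y` it is at least that of
`q j`. The lower bound matters: a real `limsup` of a sequence unbounded below is a junk value.
-/

open Asymptotics Set

section ClarkeQuotient

variable {E : Type*} [NormedAddCommGroup E] [NormedSpace ℝ E]

noncomputable def clarkeQuotient (f : E → ℝ) (d : E) (p : E × ℝ) : ℝ :=
  (f (p.1 + p.2 • d) - f p.1) / p.2

theorem tendsto_fst_add_snd_smul (x d : E) {l : Filter ℝ} (hl : l ≤ 𝓝 0) :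
    Tendsto (fun p : E × ℝ => p.1 + p.2 • d) (𝓝 x ×ˢ l) (𝓝 x) := by
  simpa using tendsto_fst.add ((tendsto_snd.mono_right hl).smul_const d)

theorem HasStrictFDerivAt.tendsto_clarkeQuotient {g : E → ℝ} {g' : E →L[ℝ] ℝ} {x : E}
    (h : HasStrictFDerivAt g g' x) (d : E) :
    Tendsto (clarkeQuotient g d) (𝓝 x ×ˢ 𝓝[≠] 0) (𝓝 (g' d)) := by
  have ho := h.isLittleO.comp_tendsto
    ((tendsto_fst_add_snd_smul x d (nhdsWithin_le_nhds (s := {0}ᶜ))).prodMk_nhds tendsto_fst)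
  simp only [Function.comp_def, add_sub_cancel_left, map_smul, smul_eq_mul] at ho
  have hsmul : (fun p : E × ℝ => p.2 • d) =O[𝓝 x ×ˢ 𝓝[≠] 0] Prod.snd :=
    isBigO_of_le' _ fun p => by rw [norm_smul, mul_comm]
  rw [← zero_add (g' d)]
  refine ((ho.trans_isBigO hsmul).tendsto_div_nhds_zero.add_const (g' d)).congr' ?_
  filter_upwards [tendsto_snd.eventually (self_mem_nhdsWithin (s := {0}ᶜ))] with p hp
  rw [clarkeQuotient, sub_div, sub_div, mul_div_cancel_left₀ _ hp, sub_add_cancel]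

theorem clarkeQuotient_le_of_le_of_eq {f g : E → ℝ} {d y : E} {t : ℝ} (ht : 0 < t)
    (hle : g y ≤ f y) (heq : f (y + t • d) = g (y + t • d)) :
    clarkeQuotient f d (y, t) ≤ clarkeQuotient g d (y, t) :=
  div_le_div_of_nonneg_right (by linarith) ht.le

theorem clarkeQuotient_le_of_eq_of_le {f g : E → ℝ} {d y : E} {t : ℝ} (ht : 0 < t)
    (heq : f y = g y) (hle : g (y + t • d) ≤ f (y + t • d)) :
    clarkeQuotient g d (y, t) ≤ clarkeQuotient f d (y, t) :=
  div_le_div_of_nonneg_right (by linarith) ht.le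

end ClarkeQuotient

theorem eventually_active_imp_active {X ι : Type*} [TopologicalSpace X] [Finite ι]
    {q : ι → X → ℝ} {f : X → ℝ} {x : X} (hq : ∀ j, ContinuousAt (q j) x)
    (hf : ∀ y, IsGreatest (range fun j => q j y) (f y)) :
    ∀ᶠ y in 𝓝 x, ∀ j, q j y = f y → q j x = f x := by
  rw [eventually_all]
  intro j
  by_cases hj : q j x = f x
  · exact .of_forall fun _ _ => hj
  obtain ⟨i, hi : q i x = f x⟩ := (hf x).1
  have hlt : q j x < q i x := hi ▸ ((hf x).2 ⟨j, rfl⟩).lt_of_ne hj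
  filter_upwards [(hq j).eventually_lt (hq i) hlt] with y hy hjy
  exact absurd hjy (hy.trans_le ((hf y).2 ⟨i, rfl⟩)).ne

theorem limsup_clarkeQuotient_le_sup' {E ι : Type*} [NormedAddCommGroup E] [NormedSpace ℝ E]
    [Finite ι] {q : ι → E → ℝ} {q' : ι → E →L[ℝ] ℝ} {f : E → ℝ} {x : E}
    (hq : ∀ j, HasStrictFDerivAt (q j) (q' j) x)
    (hf : ∀ y, IsGreatest (range fun j => q j y) (f y)) (d : E)
    {J : Finset ι} (hJ : ∀ j, q j x = f x → j ∈ J) (hJne : J.Nonempty) :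
    limsup (clarkeQuotient f d) (𝓝 x ×ˢ 𝓝[>] 0) ≤ J.sup' hJne fun j => q' j d := by
  set F : Filter (E × ℝ) := 𝓝 x ×ˢ 𝓝[>] 0
  have hq_lim : ∀ j, Tendsto (clarkeQuotient (q j) d) F (𝓝 (q' j d)) := fun j =>
    ((hq j).tendsto_clarkeQuotient d).mono_left (prod_mono le_rfl (nhdsGT_le_nhdsNE 0))
  have hpos : ∀ᶠ p in F, 0 < p.2 := tendsto_snd.eventually self_mem_nhdsWithin
  have hactive := eventually_active_imp_active (fun j => (hq j).continuousAt) hf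
  have hupper : ∀ᶠ p in F,
      clarkeQuotient f d p ≤ J.sup' hJne fun j => clarkeQuotient (q j) d p := by
    filter_upwards [hpos, (tendsto_fst_add_snd_smul x d nhdsWithin_le_nhds).eventually hactive]
      with p hp hact
    obtain ⟨j, hj⟩ := (hf _).1
    exact (clarkeQuotient_le_of_le_of_eq hp ((hf _).2 ⟨j, rfl⟩) hj.symm).trans
      (J.le_sup' (fun j => clarkeQuotient (q j) d p) (hJ j (hact j hj)))
  have hlower : ∀ᶠ p in F,
      (J.inf' hJne fun j => clarkeQuotient (q j) d p) ≤ clarkeQuotient f d p := by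
    filter_upwards [hpos, tendsto_fst.eventually hactive] with p hp hact
    obtain ⟨j, hj⟩ := (hf p.1).1
    exact (J.inf'_le (fun j => clarkeQuotient (q j) d p) (hJ j (hact j hj))).trans
      (clarkeQuotient_le_of_eq_of_le hp hj.symm ((hf _).2 ⟨j, rfl⟩))
  have hsup := Tendsto.finset_sup'_nhds_apply hJne fun j _ => hq_lim j
  have hbdd : IsBoundedUnder (· ≥ ·) F (clarkeQuotient f d) :=
    (Tendsto.finset_inf'_nhds_apply hJne fun j _ => hq_lim j).isBoundedUnder_ge.mono_ge hlower
  calc limsup (clarkeQuotient f d) F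
      ≤ limsup (fun p => J.sup' hJne fun j => clarkeQuotient (q j) d p) F :=
        limsup_le_limsup hupper hbdd.isCoboundedUnder_le hsup.isBoundedUnder_le
    _ = J.sup' hJne fun j => q' j d := hsup.limsup_eq

/-- Let `q₁, …, q_p : ℝⁿ → ℝ` be continuously differentiable and let
`f x = max_j q_j x`.  Fix `x` and let `J` be the set of active indices at `x`.  Then for
every `d`, the Clarke directional derivative satisfies
`f°(x; d) ≤ max_{j ∈ J} ⟪∇q_j(x), d⟫`; in particular
`f°(x; d) ≤ max_{j} ⟪∇q_j(x), d⟫`. -/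
theorem clarke_deriv_finite_max_le {n p : ℕ} (hp : 0 < p)
    (q : Fin p → EuclideanSpace ℝ (Fin n) → ℝ)
    (hq : ∀ j, ContDiff ℝ 1 (q j))
    (f : EuclideanSpace ℝ (Fin n) → ℝ)
    (hf : ∀ y, IsGreatest (Set.range fun j => q j y) (f y))
    (x d : EuclideanSpace ℝ (Fin n))
    (J : Finset (Fin p)) (hJ : J = Finset.univ.filter fun j => q j x = f x)
    (hJne : J.Nonempty) :
    clarkeDeriv f x d ≤ J.sup' hJne (fun j => ⟪gradient (q j) x, d⟫_ℝ) ∧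
      clarkeDeriv f x d ≤
        Finset.univ.sup' ⟨⟨0, hp⟩, Finset.mem_univ _⟩ (fun j => ⟪gradient (q j) x, d⟫_ℝ) := by
  have hgrad : ∀ j, ⟪gradient (q j) x, d⟫_ℝ = fderiv ℝ (q j) x d := fun j => by
    simp [gradient, InnerProductSpace.toDual_symm_apply]
  have hle : ∀ (K : Finset (Fin p)) (hK : ∀ j, q j x = f x → j ∈ K) (hKne : K.Nonempty),
      clarkeDeriv f x d ≤ K.sup' hKne fun j => ⟪gradient (q j) x, d⟫_ℝ := by
    intro K hK hKne
    simp only [hgrad]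
    exact limsup_clarkeQuotient_le_sup' (fun j => (hq j).hasStrictFDerivAt one_ne_zero) hf d
      hK hKne
  exact ⟨hle J (fun j hj => by simp [hJ, hj]) hJne, hle _ (fun j _ => Finset.mem_univ j) _⟩
end
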